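/- arXiv:1306.5446 — 5 statements merged into one kernel-verified Lean document; each statement's English description precedes it below -/
import Mathlib

section
/- Let 𝕊 be a metric space, let (P_i)_{i∈ℕ} be a sequence of Borel probability measures on 𝕊, and let r_i > 0 with r_i → ∞. If (P_i) is exponentially tight for rate r_i, then there exist a subsequence (P_{i_j}) and a large deviation function I : 𝕊 → [0,∞] such that (P_{i_j}) obeys the LDP with I for rate r_{i_j} as j → ∞. (Hence a sequentially exponentially tight net of probability measures is sequentially large-deviation relatively compact.) -/
open MeasureTheory Filter Set Topology

/-- Extended logarithm of an extended nonnegative real, with `log 0 = ⊥` and `log ⊤ = ⊤`. -/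
noncomputable def elog (x : ENNReal) : EReal :=
  if x = 0 then ⊥ else if x = ⊤ then ⊤ else ((Real.log x.toReal : ℝ) : EReal)

/-- `I` is a (tight) large deviation rate function: its sublevel sets at finite levels
are compact. -/
def IsLDRateFun {𝕊 : Type*} [TopologicalSpace 𝕊] (I : 𝕊 → ENNReal) : Prop :=
  ∀ δ : NNReal, IsCompact {z : 𝕊 | I z ≤ (δ : ENNReal)}

/-- The sequence of measures `P i` obeys the large deviation principle with rate
function `I` for rates `r i`. -/
def LDPseq {𝕊 : Type*} [TopologicalSpace 𝕊] [MeasurableSpace 𝕊]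
    (P : ℕ → Measure 𝕊) (r : ℕ → ℝ) (I : 𝕊 → ENNReal) : Prop :=
  (∀ G : Set 𝕊, IsOpen G →
    (-(⨅ z ∈ G, (I z : EReal)) : EReal) ≤
      Filter.liminf (fun i => (((r i)⁻¹ : ℝ) : EReal) * elog (P i G)) Filter.atTop) ∧
  (∀ F : Set 𝕊, IsClosed F →
      Filter.limsup (fun i => (((r i)⁻¹ : ℝ) : EReal) * elog (P i F)) Filter.atTop ≤
        (-(⨅ z ∈ F, (I z : EReal)) : EReal))

/-- The sequence `P i` is exponentially tight for rates `r i`. -/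
def ExpTightSeq {𝕊 : Type*} [TopologicalSpace 𝕊] [MeasurableSpace 𝕊]
    (P : ℕ → Measure 𝕊) (r : ℕ → ℝ) : Prop :=
  ∀ κ : ENNReal, 0 < κ → ∃ K : Set 𝕊, IsCompact K ∧
    Filter.limsup (fun i => (P i Kᶜ) ^ ((r i)⁻¹ : ℝ)) Filter.atTop < κ

/-!
Exponential tightness gives compact sets `K n` with `P i (K n)ᶜ ≤ exp (-n r i)` eventually.
Their union is separable, so countably many open sets — small balls around a countable dense
subset, together with the sets `(K n)ᶜ` — form a neighbourhood base at each of its points.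
Since `EReal` is compact, a diagonal subsequence makes `r⁻¹ log P U` converge to some `L U` for
every such `U`, and `I z = sup {-L U | z ∈ U}` is the rate function: `I ≥ n` off `K n`, the
lower bound comes from the base property, the upper bound holds on compact sets by finite
covers and the principle of the largest term, and extends to closed sets through the `K n`.
-/

open scoped ENNReal

lemma elog_mono : Monotone elog := by
  intro x y h
  unfold elog
  rcases eq_or_ne x 0 with hx | hx
  · simp [hx]
  have hy : y ≠ 0 := ((pos_iff_ne_zero.2 hx).trans_le h).ne'
  rcases eq_or_ne y ⊤ with hyt | hyt
  · simp [hx, hyt]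
  have hxt : x ≠ ⊤ := ne_top_of_le_ne_top hyt h
  simp only [hx, hxt, hy, hyt, if_false]
  exact_mod_cast Real.log_le_log (ENNReal.toReal_pos hx hxt) (ENNReal.toReal_mono hyt h)

lemma elog_le_coe_iff {x : ℝ≥0∞} {b : ℝ} : elog x ≤ b ↔ x ≤ ENNReal.ofReal (Real.exp b) := by
  unfold elog
  rcases eq_or_ne x 0 with hx | hx
  · simp [hx]
  rcases eq_or_ne x ⊤ with hxt | hxt
  · simp [hxt]
  simp only [hx, hxt, if_false, EReal.coe_le_coe_iff]
  rw [Real.log_le_iff_le_exp (ENNReal.toReal_pos hx hxt),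
    ← ENNReal.le_ofReal_iff_toReal_le hxt (Real.exp_nonneg b)]

section ScaledLogMeasure

variable {𝕊 : Type*} [MeasurableSpace 𝕊]

noncomputable def scaledLogMeasure (P : ℕ → Measure 𝕊) (r : ℕ → ℝ) (i : ℕ) (A : Set 𝕊) : EReal :=
  ((r i)⁻¹ : ℝ) * elog (P i A)

lemma exists_subseq_tendsto_scaledLogMeasure (P : ℕ → Measure 𝕊) (r : ℕ → ℝ) {ι : Type*}
    [Countable ι] (B : ι → Set 𝕊) :
    ∃ L : ι → EReal, ∃ φ : ℕ → ℕ, StrictMono φ ∧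
      ∀ p, Tendsto (fun j => scaledLogMeasure (P ∘ φ) (r ∘ φ) j (B p)) atTop (𝓝 (L p)) := by
  obtain ⟨L, φ, hφ, h⟩ := CompactSpace.tendsto_subseq fun i p => scaledLogMeasure P r i (B p)
  exact ⟨L, φ, hφ, tendsto_pi_nhds.1 h⟩

variable {P : ℕ → Measure 𝕊} {r : ℕ → ℝ}

lemma scaledLogMeasure_le_iff {i : ℕ} (hri : 0 < r i) {A : Set 𝕊} {c : ℝ} :
    scaledLogMeasure P r i A ≤ c ↔ P i A ≤ ENNReal.ofReal (Real.exp (c * r i)) := by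
  rw [scaledLogMeasure, EReal.coe_inv, mul_comm, ← div_eq_mul_inv,
    EReal.div_le_iff_le_mul (by exact_mod_cast hri) (EReal.coe_ne_top _), ← EReal.coe_mul,
    elog_le_coe_iff, mul_comm]

lemma scaledLogMeasure_mono {i : ℕ} (hri : 0 ≤ r i) {A B : Set 𝕊} (h : A ⊆ B) :
    scaledLogMeasure P r i A ≤ scaledLogMeasure P r i B :=
  mul_le_mul_of_nonneg_left (elog_mono (measure_mono h)) (by exact_mod_cast inv_nonneg.2 hri)

lemma limsup_scaledLogMeasure_mono (hr : ∀ᶠ i in atTop, 0 < r i) {A B : Set 𝕊} (h : A ⊆ B) :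
    limsup (fun i => scaledLogMeasure P r i A) atTop ≤
      limsup (fun i => scaledLogMeasure P r i B) atTop :=
  limsup_le_limsup (hr.mono fun _ hi => scaledLogMeasure_mono hi.le h)

lemma liminf_scaledLogMeasure_mono (hr : ∀ᶠ i in atTop, 0 < r i) {A B : Set 𝕊} (h : A ⊆ B) :
    liminf (fun i => scaledLogMeasure P r i A) atTop ≤
      liminf (fun i => scaledLogMeasure P r i B) atTop :=
  liminf_le_liminf (hr.mono fun _ hi => scaledLogMeasure_mono hi.le h)

lemma limsup_scaledLogMeasure_nonpos (hP : ∀ i, IsProbabilityMeasure (P i))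
    (hr : ∀ᶠ i in atTop, 0 < r i) (A : Set 𝕊) :
    limsup (fun i => scaledLogMeasure P r i A) atTop ≤ 0 :=
  limsup_le_of_le (h := hr.mono fun i hi => by
    simpa using (scaledLogMeasure_le_iff (A := A) (c := 0) hi).2 (by simpa using prob_le_one))

/-- The principle of the largest term: `log (a₁ + ⋯ + aₘ) ≤ log m + max log aₖ`, and the
`log m` disappears after division by `r i → ∞`. -/
lemma limsup_scaledLogMeasure_biUnion_le (hr : Tendsto r atTop atTop) {ι : Type*} {t : Set ι}
    (ht : t.Finite) (A : ι → Set 𝕊) {c : ℝ}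
    (h : ∀ k ∈ t, ∀ᶠ i in atTop, scaledLogMeasure P r i (A k) ≤ c) :
    limsup (fun i => scaledLogMeasure P r i (⋃ k ∈ t, A k)) atTop ≤ c := by
  lift t to Finset ι using ht
  set M : ℝ := t.card + 1
  have hM : 0 < M := by positivity
  have hbound : ∀ᶠ i in atTop,
      scaledLogMeasure P r i (⋃ k ∈ t, A k) ≤ ((Real.log M / r i + c : ℝ) : EReal) := by
    filter_upwards [hr.eventually_gt_atTop 0, (eventually_all_finset t).2 h] with i hri hA
    rw [scaledLogMeasure_le_iff hri]
    calc P i (⋃ k ∈ t, A k) ≤ ∑ k ∈ t, P i (A k) := measure_biUnion_finset_le _ _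
      _ ≤ ∑ _k ∈ t, ENNReal.ofReal (Real.exp (c * r i)) :=
          Finset.sum_le_sum fun k hk => (scaledLogMeasure_le_iff hri).1 (hA k hk)
      _ = ENNReal.ofReal (t.card * Real.exp (c * r i)) := by
          rw [Finset.sum_const, nsmul_eq_mul, ENNReal.ofReal_mul (by positivity),
            ENNReal.ofReal_natCast]
      _ ≤ ENNReal.ofReal (M * Real.exp (c * r i)) := by gcongr; linarith
      _ = ENNReal.ofReal (Real.exp ((Real.log M / r i + c) * r i)) := by
          rw [add_mul (Real.log M / r i), div_mul_cancel₀ _ hri.ne', Real.exp_add, Real.exp_log hM]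
  have hlim : Tendsto (fun i => Real.log M / r i + c) atTop (𝓝 c) := by
    simpa [div_eq_mul_inv] using (hr.inv_tendsto_atTop.const_mul (Real.log M)).add_const c
  calc limsup (fun i => scaledLogMeasure P r i (⋃ k ∈ t, A k)) atTop
      ≤ limsup (fun i => ((Real.log M / r i + c : ℝ) : EReal)) atTop := limsup_le_limsup hbound
    _ = c := (EReal.tendsto_coe.2 hlim).limsup_eq

lemma ExpTightSeq.exists_isCompact_scaledLogMeasure_compl_le [TopologicalSpace 𝕊]
    (h : ExpTightSeq P r) (hr : ∀ᶠ i in atTop, 0 < r i) (c : ℝ) :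
    ∃ K, IsCompact K ∧ ∀ᶠ i in atTop, scaledLogMeasure P r i Kᶜ ≤ c := by
  obtain ⟨K, hK, hlt⟩ := h _ (ENNReal.ofReal_pos.2 (Real.exp_pos c))
  refine ⟨K, hK, ?_⟩
  filter_upwards [hr, eventually_lt_of_limsup_lt hlt] with i hri hi
  rw [scaledLogMeasure_le_iff hri, Real.exp_mul, ← ENNReal.ofReal_rpow_of_pos (Real.exp_pos c),
    ← ENNReal.rpow_inv_le_iff hri]
  exact hi.le

end ScaledLogMeasure

lemma exists_countable_nhds_basis_of_isSeparable {X : Type*} [PseudoMetricSpace X] {s : Set X}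
    (hs : TopologicalSpace.IsSeparable s) :
    ∃ 𝓑 : Set (Set X), 𝓑.Countable ∧ (∀ U ∈ 𝓑, IsOpen U) ∧
      ∀ z ∈ s, ∀ G, IsOpen G → z ∈ G → ∃ U ∈ 𝓑, z ∈ U ∧ U ⊆ G := by
  obtain ⟨D, hDc, hsD⟩ := hs
  refine ⟨image2 (fun x (k : ℕ) => Metric.ball x (1 / ((k : ℝ) + 1))) D univ,
    hDc.image2 countable_univ _, ?_, fun z hz G hG hzG => ?_⟩
  · rintro _ ⟨x, -, k, -, rfl⟩
    exact Metric.isOpen_ball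
  obtain ⟨ε, hε, hεG⟩ := Metric.isOpen_iff.1 hG z hzG
  obtain ⟨k, hk⟩ := exists_nat_one_div_lt (half_pos hε)
  obtain ⟨x, hxD, hzx⟩ := Metric.mem_closure_iff.1 (hsD hz) _ (Nat.one_div_pos_of_nat (n := k))
  refine ⟨_, mem_image2_of_mem hxD (mem_univ k), Metric.mem_ball.2 hzx,
    (Metric.ball_subset_ball' ?_).trans hεG⟩
  linarith [dist_comm x z]

section RateFun

variable {𝕊 ι : Type*} (B : ι → Set 𝕊) (L : ι → EReal)

noncomputable def limitRateFun (z : 𝕊) : ℝ≥0∞ :=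
  ⨆ p, ⨆ _ : z ∈ B p, (-L p).toENNReal

variable {B L}

lemma le_limitRateFun {z : 𝕊} {p : ι} (hz : z ∈ B p) :
    (-L p).toENNReal ≤ limitRateFun B L z :=
  le_iSup₂_of_le (f := fun p (_ : z ∈ B p) => (-L p).toENNReal) p hz le_rfl

lemma exists_mem_lt_neg_of_lt_limitRateFun {z : 𝕊} {a : ℝ≥0∞} (h : a < limitRateFun B L z) :
    ∃ p, z ∈ B p ∧ (a : EReal) < -L p := by
  obtain ⟨p, hp⟩ := lt_iSup_iff.1 h
  obtain ⟨hz, hp⟩ := lt_iSup_iff.1 hp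
  refine ⟨p, hz, ?_⟩
  have := EReal.coe_ennreal_lt_coe_ennreal_iff.2 hp
  rw [EReal.coe_toENNReal_eq_max, lt_max_iff] at this
  exact this.resolve_left (not_lt_of_ge (EReal.coe_ennreal_nonneg a))

lemma lowerSemicontinuous_limitRateFun [TopologicalSpace 𝕊] (hB : ∀ p, IsOpen (B p)) :
    LowerSemicontinuous (limitRateFun B L) := by
  refine lowerSemicontinuous_iSup fun p => ?_
  convert (hB p).lowerSemicontinuous_indicator (zero_le (a := (-L p).toENNReal)) using 1
  ext z
  classical
  simp [iSup_eq_if, indicator_apply]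

end RateFun

lemma IsLDRateFun.of_lowerSemicontinuous {𝕊 : Type*} [TopologicalSpace 𝕊] {I : 𝕊 → ℝ≥0∞}
    (hI : LowerSemicontinuous I) {K : ℕ → Set 𝕊} (hK : ∀ n, IsCompact (K n))
    (hIK : ∀ n : ℕ, ∀ z ∉ K n, (n : ℝ≥0∞) ≤ I z) : IsLDRateFun I := fun δ => by
  obtain ⟨n, hn⟩ := ENNReal.exists_nat_gt (ENNReal.coe_ne_top (r := δ))
  refine (hK n).of_isClosed_subset (hI.isClosed_preimage δ) fun z hz => ?_
  by_contra hzK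
  exact (hIK n z hzK).not_gt (lt_of_le_of_lt hz hn)

section LDP

variable {𝕊 ι : Type*} [MeasurableSpace 𝕊] [TopologicalSpace 𝕊] {P : ℕ → Measure 𝕊}
  {r : ℕ → ℝ} {B : ι → Set 𝕊} {L : ι → EReal}

lemma neg_iInf_limitRateFun_le_liminf (hr : ∀ᶠ i in atTop, 0 < r i)
    (hconv : ∀ p, Tendsto (fun i => scaledLogMeasure P r i (B p)) atTop (𝓝 (L p)))
    (hbase : ∀ z, limitRateFun B L z ≠ ⊤ → ∀ G, IsOpen G → z ∈ G → ∃ p, z ∈ B p ∧ B p ⊆ G)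
    {G : Set 𝕊} (hG : IsOpen G) :
    -⨅ z ∈ G, (limitRateFun B L z : EReal) ≤ liminf (fun i => scaledLogMeasure P r i G) atTop := by
  refine EReal.neg_le.2 (le_iInf₂ fun z hz => EReal.neg_le.1 ?_)
  rcases eq_or_ne (limitRateFun B L z) ⊤ with htop | hfin
  · simp [htop]
  obtain ⟨p, hzp, hpG⟩ := hbase z hfin G hG hz
  calc -(limitRateFun B L z : EReal) ≤ -((-L p).toENNReal : EReal) :=
        EReal.neg_le_neg_iff.2 (EReal.coe_ennreal_le_coe_ennreal_iff.2 (le_limitRateFun hzp))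
    _ ≤ L p := EReal.neg_le.1 (EReal.coe_toENNReal_eq_max ▸ le_max_right _ _)
    _ = liminf (fun i => scaledLogMeasure P r i (B p)) atTop := (hconv p).liminf_eq.symm
    _ ≤ liminf (fun i => scaledLogMeasure P r i G) atTop := liminf_scaledLogMeasure_mono hr hpG

lemma limsup_le_neg_iInf_limitRateFun_of_isCompact (hP : ∀ i, IsProbabilityMeasure (P i))
    (hr : Tendsto r atTop atTop) (hB : ∀ p, IsOpen (B p))
    (hconv : ∀ p, Tendsto (fun i => scaledLogMeasure P r i (B p)) atTop (𝓝 (L p)))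
    {F : Set 𝕊} (hF : IsCompact F) :
    limsup (fun i => scaledLogMeasure P r i F) atTop ≤ -⨅ z ∈ F, (limitRateFun B L z : EReal) := by
  refine EReal.le_of_forall_lt_iff_le.1 fun c hc => ?_
  rcases le_or_gt 0 c with hc0 | hc0
  · exact (limsup_scaledLogMeasure_nonpos hP (hr.eventually_gt_atTop 0) F).trans
      (EReal.coe_nonneg.2 hc0)
  have hcover : F ⊆ ⋃ p ∈ {p | L p < c}, B p := fun z hz => by
    have hcz : ENNReal.ofReal (-c) < limitRateFun B L z := by
      rw [← EReal.coe_ennreal_lt_coe_ennreal_iff, EReal.coe_ennreal_ofReal,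
        max_eq_left (by linarith), EReal.coe_neg]
      exact (EReal.neg_lt_comm.1 hc).trans_le (iInf₂_le z hz)
    obtain ⟨p, hzp, hp⟩ := exists_mem_lt_neg_of_lt_limitRateFun hcz
    rw [EReal.coe_ennreal_ofReal, max_eq_left (by linarith), EReal.coe_neg] at hp
    exact mem_biUnion (EReal.neg_lt_neg_iff.1 hp) hzp
  obtain ⟨t, hts, ht, hFt⟩ := hF.elim_finite_subcover_image (fun p _ => hB p) hcover
  calc limsup (fun i => scaledLogMeasure P r i F) atTop
      ≤ limsup (fun i => scaledLogMeasure P r i (⋃ p ∈ t, B p)) atTop :=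
        limsup_scaledLogMeasure_mono (hr.eventually_gt_atTop 0) hFt
    _ ≤ c := limsup_scaledLogMeasure_biUnion_le hr ht B fun p hp =>
        ((hconv p).eventually (gt_mem_nhds (hts hp))).mono fun _ => le_of_lt

lemma limsup_le_neg_iInf_of_isClosed (hr : Tendsto r atTop atTop) {I : 𝕊 → ℝ≥0∞}
    (hcpt : ∀ K, IsCompact K →
      limsup (fun i => scaledLogMeasure P r i K) atTop ≤ -⨅ z ∈ K, (I z : EReal))
    {K : ℕ → Set 𝕊} (hK : ∀ n, IsCompact (K n))
    (hKc : ∀ n : ℕ, ∀ᶠ i in atTop, scaledLogMeasure P r i (K n)ᶜ ≤ (-n : ℝ))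
    {F : Set 𝕊} (hF : IsClosed F) :
    limsup (fun i => scaledLogMeasure P r i F) atTop ≤ -⨅ z ∈ F, (I z : EReal) := by
  refine EReal.le_of_forall_lt_iff_le.1 fun c hc => ?_
  obtain ⟨n, hn⟩ := exists_nat_gt (-c)
  have hFK : limsup (fun i => scaledLogMeasure P r i (F ∩ K n)) atTop < c :=
    (hcpt _ ((hK n).inter_left hF)).trans_lt
      ((EReal.neg_le_neg_iff.2 (biInf_mono inter_subset_left)).trans_lt hc)
  have hsplit : F ⊆ ⋃ b ∈ (univ : Set Bool), cond b (F ∩ K n) (K n)ᶜ := by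
    simp only [mem_univ, iUnion_true, ← union_eq_iUnion]
    exact fun z hz => (em (z ∈ K n)).imp (fun h => ⟨hz, h⟩) id
  refine (limsup_scaledLogMeasure_mono (hr.eventually_gt_atTop 0) hsplit).trans
    (limsup_scaledLogMeasure_biUnion_le hr finite_univ _ fun b _ => ?_)
  cases b
  · exact (hKc n).mono fun _ h => h.trans (EReal.coe_le_coe_iff.2 (by linarith))
  · exact (eventually_lt_of_limsup_lt hFK).mono fun _ => le_of_lt

theorem isLDRateFun_and_ldpSeq_limitRateFun (hP : ∀ i, IsProbabilityMeasure (P i))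
    (hr : Tendsto r atTop atTop) {K : ℕ → Set 𝕊} (hK : ∀ n, IsCompact (K n))
    (hKc : ∀ n : ℕ, ∀ᶠ i in atTop, scaledLogMeasure P r i (K n)ᶜ ≤ (-n : ℝ))
    (hB : ∀ p, IsOpen (B p)) (hKB : ∀ n, ∃ p, B p = (K n)ᶜ)
    (hbase : ∀ z ∈ ⋃ n, K n, ∀ G, IsOpen G → z ∈ G → ∃ p, z ∈ B p ∧ B p ⊆ G)
    (hconv : ∀ p, Tendsto (fun i => scaledLogMeasure P r i (B p)) atTop (𝓝 (L p))) :
    IsLDRateFun (limitRateFun B L) ∧ LDPseq P r (limitRateFun B L) := by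
  have hIK : ∀ n : ℕ, ∀ z ∉ K n, (n : ℝ≥0∞) ≤ limitRateFun B L z := fun n z hz => by
    obtain ⟨p, hp⟩ := hKB n
    have hLp : L p ≤ (-n : ℝ) := le_of_tendsto (hconv p) (by rw [hp]; exact hKc n)
    calc (n : ℝ≥0∞) = ((n : ℝ) : EReal).toENNReal := by
          rw [EReal.real_coe_toENNReal, ENNReal.ofReal_natCast]
      _ ≤ (-L p).toENNReal := EReal.toENNReal_le_toENNReal (EReal.le_neg.1 hLp)
      _ ≤ limitRateFun B L z := le_limitRateFun (hp ▸ hz)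
  have hfin : ∀ z, limitRateFun B L z ≠ ⊤ → z ∈ ⋃ n, K n := fun z hz => by
    obtain ⟨n, hn⟩ := ENNReal.exists_nat_gt hz
    exact mem_iUnion.2 ⟨n, by_contra fun h => (hIK n z h).not_gt hn⟩
  exact ⟨.of_lowerSemicontinuous (lowerSemicontinuous_limitRateFun hB) hK hIK,
    fun G hG => neg_iInf_limitRateFun_le_liminf (hr.eventually_gt_atTop 0) hconv
      (fun z hz => hbase z (hfin z hz)) hG,
    fun F hF => limsup_le_neg_iInf_of_isClosed hr
      (fun _ hC => limsup_le_neg_iInf_limitRateFun_of_isCompact hP hr hB hconv hC) hK hKc hF⟩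

end LDP

theorem expTight_implies_LD_relatively_compact_general
    {𝕊 : Type*} [MetricSpace 𝕊] [MeasurableSpace 𝕊]
    (P : ℕ → Measure 𝕊) (hP : ∀ i, IsProbabilityMeasure (P i))
    (r : ℕ → ℝ) (hrtop : Tendsto r atTop atTop)
    (htight : ExpTightSeq P r) :
    ∃ φ : ℕ → ℕ, StrictMono φ ∧ ∃ I : 𝕊 → ENNReal,
      IsLDRateFun I ∧ LDPseq (P ∘ φ) (r ∘ φ) I := by
  choose K hK hKc using fun n : ℕ =>
    htight.exists_isCompact_scaledLogMeasure_compl_le (hrtop.eventually_gt_atTop 0) (-n)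
  obtain ⟨𝓑, h𝓑c, h𝓑o, h𝓑⟩ :=
    exists_countable_nhds_basis_of_isSeparable (.iUnion fun n => (hK n).isSeparable)
  let 𝓐 : Set (Set 𝕊) := 𝓑 ∪ range fun n => (K n)ᶜ
  have : Countable 𝓐 := (h𝓑c.union (countable_range _)).to_subtype
  obtain ⟨L, φ, hφ, hL⟩ := exists_subseq_tendsto_scaledLogMeasure P r ((↑) : 𝓐 → Set 𝕊)
  refine ⟨φ, hφ, _, isLDRateFun_and_ldpSeq_limitRateFun (fun j => hP (φ j))
    (hrtop.comp hφ.tendsto_atTop) hK (fun n => hφ.tendsto_atTop.eventually (hKc n)) ?_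
    (fun n => ⟨⟨_, .inr ⟨n, rfl⟩⟩, rfl⟩) (fun z hz G hG hzG => ?_) hL⟩
  · rintro ⟨U, hU | ⟨n, rfl⟩⟩
    exacts [h𝓑o U hU, (hK n).isClosed.isOpen_compl]
  · obtain ⟨U, hU, hzU, hUG⟩ := h𝓑 z hz G hG hzG
    exact ⟨⟨U, .inl hU⟩, hzU, hUG⟩

/-- Exponential tightness implies large-deviation relative compactness: an exponentially
tight sequence of Borel probability measures on a metric space has a subsequence obeying
the LDP with some large deviation rate function. -/
theorem expTight_implies_LD_relatively_compact
    {𝕊 : Type*} [MetricSpace 𝕊] [MeasurableSpace 𝕊] [BorelSpace 𝕊]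
    (P : ℕ → Measure 𝕊) (hP : ∀ i, IsProbabilityMeasure (P i))
    (r : ℕ → ℝ) (hrpos : ∀ i, 0 < r i) (hrtop : Tendsto r atTop atTop)
    (htight : ExpTightSeq P r) :
    ∃ φ : ℕ → ℕ, StrictMono φ ∧ ∃ I : 𝕊 → ENNReal,
      IsLDRateFun I ∧ LDPseq (P ∘ φ) (r ∘ φ) I :=
  expTight_implies_LD_relatively_compact_general P hP r hrtop htight
end

section
/- Let 𝕊 be a metric space, (P_i)_{i∈ℕ} a sequence of Borel probability measures on 𝕊, and r_i > 0 with r_i → ∞. Suppose (P_i) is exponentially tight for rate r_i, and let I be an LD limit point of (P_i). Let U_i : 𝕊 → ℝ be Borel measurable functions which are uniformly bounded (sup_i sup_{z∈𝕊} |U_i(z)| < ∞) and satisfy ∫_𝕊 exp(r_i U_i(z)) P_i(dz) = 1 for every i. If U_i → U uniformly on every compact subset of 𝕊 and U is continuous, then sup_{z∈𝕊} (U(z) − I(z)) = 0. -/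
open MeasureTheory Filter Set Topology

/-! Both inequalities come from confronting the normalisation `∫ exp (r_i U_i) dP_i = 1` with the
large deviation bounds along the subsequence. If `U z > I z`, the LDP lower bound for a
neighbourhood of `z` on which `U` stays close to `U z`, intersected with a compact set that carries
all but an exponentially small part of the mass and on which `U_i → U` uniformly, makes the
integral exponentially large. If `sup (U - I) < 0`, cover such a compact set `K` by finitely many
closed neighbourhoods on which `U` is almost constant: the LDP upper bound on each of them makes
`∫_K exp (r_i U_i) dP_i` exponentially small, and the uniform bound on `U_i` does the same for the
integral over `Kᶜ`, so the integral tends to `0`. -/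

open scoped ENNReal

lemma ofReal_exp_mul_ofReal_exp (x y : ℝ) :
    ENNReal.ofReal (Real.exp x) * ENNReal.ofReal (Real.exp y) =
      ENNReal.ofReal (Real.exp (x + y)) := by
  rw [← ENNReal.ofReal_mul (Real.exp_pos x).le, Real.exp_add]

lemma EReal.coe_lt_coe_inv_mul_iff {ρ : ℝ} (hρ : 0 < ρ) (a : ℝ) (y : EReal) :
    (a : EReal) < ((ρ⁻¹ : ℝ) : EReal) * y ↔ ((ρ * a : ℝ) : EReal) < y := by
  rw [EReal.coe_inv, mul_comm, ← div_eq_mul_inv,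
    EReal.lt_div_iff (by exact_mod_cast hρ) (EReal.coe_ne_top ρ), mul_comm]
  norm_cast

lemma EReal.coe_inv_mul_lt_coe_iff {ρ : ℝ} (hρ : 0 < ρ) (b : ℝ) (y : EReal) :
    ((ρ⁻¹ : ℝ) : EReal) * y < b ↔ y < ((ρ * b : ℝ) : EReal) := by
  rw [EReal.coe_inv, mul_comm, ← div_eq_mul_inv,
    EReal.div_lt_iff (by exact_mod_cast hρ) (EReal.coe_ne_top ρ), mul_comm]
  norm_cast

lemma ofReal_exp_mul_lt_iff {ρ : ℝ} (hρ : 0 < ρ) (a : ℝ) (x : ℝ≥0∞) :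
    ENNReal.ofReal (Real.exp (ρ * a)) < x ↔ (a : EReal) < ((ρ⁻¹ : ℝ) : EReal) * elog x := by
  rw [EReal.coe_lt_coe_inv_mul_iff hρ, ← ENNReal.log_lt_log_iff,
    ENNReal.log_ofReal_of_pos (Real.exp_pos _), Real.log_exp]
  rfl

lemma inv_mul_elog_lt_iff {ρ : ℝ} (hρ : 0 < ρ) (b : ℝ) (x : ℝ≥0∞) :
    ((ρ⁻¹ : ℝ) : EReal) * elog x < b ↔ x < ENNReal.ofReal (Real.exp (ρ * b)) := by
  rw [EReal.coe_inv_mul_lt_coe_iff hρ, ← ENNReal.log_lt_log_iff,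
    ENNReal.log_ofReal_of_pos (Real.exp_pos _), Real.log_exp]
  rfl

lemma tendsto_ofReal_exp_mul_of_neg {ι : Type*} {l : Filter ι} {r : ι → ℝ}
    (hr : Tendsto r l atTop) {b : ℝ} (hb : b < 0) :
    Tendsto (fun i => ENNReal.ofReal (Real.exp (r i * b))) l (𝓝 0) := by
  rw [← ENNReal.ofReal_zero]
  exact ENNReal.tendsto_ofReal (Real.tendsto_exp_atBot.comp (hr.atTop_mul_const_of_neg hb))

section Measures

variable {X : Type*} [MeasurableSpace X]

lemma setLIntegral_ofReal_exp_mul_le (μ : Measure X) {S : Set X} {g : X → ℝ} {ρ a : ℝ}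
    (hρ : 0 ≤ ρ) (hg : ∀ z ∈ S, g z ≤ a) :
    ∫⁻ z in S, ENNReal.ofReal (Real.exp (ρ * g z)) ∂μ ≤
      ENNReal.ofReal (Real.exp (ρ * a)) * μ S := by
  rw [← setLIntegral_const]
  exact setLIntegral_mono measurable_const fun z hz => by gcongr; exact hg z hz

lemma ofReal_exp_mul_le_setLIntegral (μ : Measure X) {S : Set X} (hS : MeasurableSet S)
    {g : X → ℝ} {ρ a : ℝ} (hρ : 0 ≤ ρ) (hg : ∀ z ∈ S, a ≤ g z) :
    ENNReal.ofReal (Real.exp (ρ * a)) * μ S ≤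
      ∫⁻ z in S, ENNReal.ofReal (Real.exp (ρ * g z)) ∂μ := by
  rw [← setLIntegral_const]
  exact setLIntegral_mono' hS fun z hz => by gcongr; exact hg z hz

lemma lintegral_le_setLIntegral_add_compl (μ : Measure X) (f : X → ℝ≥0∞) (K : Set X) :
    ∫⁻ z, f z ∂μ ≤ ∫⁻ z in K, f z ∂μ + ∫⁻ z in Kᶜ, f z ∂μ := by
  simpa using lintegral_union_le f K Kᶜ

variable [TopologicalSpace X]

lemma IsCompact.exists_eventually_setLIntegral_le {ι : Type*} {l : Filter ι} {K : Set X}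
    (hK : IsCompact K) {μ : ι → Measure X} {f : ι → X → ℝ≥0∞} {c : ι → ℝ≥0∞}
    (hloc : ∀ x ∈ K, ∃ V ∈ 𝓝 x, ∀ᶠ i in l, ∫⁻ z in K ∩ V, f i z ∂μ i ≤ c i) :
    ∃ N : ℕ, ∀ᶠ i in l, ∫⁻ z in K, f i z ∂μ i ≤ N * c i := by
  choose! V hV hVc using hloc
  obtain ⟨t, htK, hcover⟩ := hK.elim_nhds_subcover V hV
  refine ⟨t.card, ?_⟩
  filter_upwards [(eventually_all_finset t).2 fun x hx => hVc x (htK x hx)] with i hi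
  have hKt : K ⊆ ⋃ x : t, K ∩ V x := fun z hz => by
    obtain ⟨x, hx, hzx⟩ := mem_iUnion₂.1 (hcover hz)
    exact mem_iUnion.2 ⟨⟨x, hx⟩, hz, hzx⟩
  calc ∫⁻ z in K, f i z ∂μ i
      ≤ ∫⁻ z in ⋃ x : t, K ∩ V x, f i z ∂μ i := lintegral_mono_set hKt
    _ ≤ ∑' x : t, ∫⁻ z in K ∩ V x, f i z ∂μ i := lintegral_iUnion_le _ _
    _ ≤ ∑' _ : t, c i := ENNReal.tsum_le_tsum fun x => hi x x.2
    _ = t.card * c i := by simp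

end Measures

section LargeDeviations

variable {X : Type*} [TopologicalSpace X] [MeasurableSpace X] {P : ℕ → Measure X} {r : ℕ → ℝ}

lemma ExpTightSeq.comp_tendsto (h : ExpTightSeq P r) {φ : ℕ → ℕ}
    (hφ : Tendsto φ atTop atTop) : ExpTightSeq (P ∘ φ) (r ∘ φ) := fun κ hκ => by
  obtain ⟨K, hK, hlim⟩ := h κ hκ
  exact ⟨K, hK, (hφ.limsup_comp_le_limsup (u := fun i => P i Kᶜ ^ (r i)⁻¹)).trans_lt hlim⟩

lemma ExpTightSeq.exists_isCompact_eventually_measure_compl_lt (h : ExpTightSeq P r)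
    (hr : ∀ i, 0 < r i) (a : ℝ) :
    ∃ K, IsCompact K ∧ ∀ᶠ i in atTop, P i Kᶜ < ENNReal.ofReal (Real.exp (r i * a)) := by
  obtain ⟨K, hK, hlim⟩ := h _ (ENNReal.ofReal_pos.2 (Real.exp_pos a))
  refine ⟨K, hK, ?_⟩
  filter_upwards [eventually_lt_of_limsup_lt hlim] with i hi
  have := ENNReal.rpow_lt_rpow hi (hr i)
  rwa [ENNReal.rpow_inv_rpow (hr i).ne', ENNReal.ofReal_rpow_of_pos (Real.exp_pos a),
    ← Real.exp_mul, mul_comm] at this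

variable {I : X → ℝ≥0∞}

lemma LDPseq.eventually_ofReal_exp_lt_measure (h : LDPseq P r I) (hr : ∀ i, 0 < r i)
    {G : Set X} (hG : IsOpen G) {a : ℝ} (ha : (a : EReal) < -(⨅ z ∈ G, (I z : EReal))) :
    ∀ᶠ i in atTop, ENNReal.ofReal (Real.exp (r i * a)) < P i G := by
  filter_upwards [eventually_lt_of_lt_liminf (ha.trans_le (h.1 G hG))] with i hi
  exact (ofReal_exp_mul_lt_iff (hr i) a _).2 hi

lemma LDPseq.eventually_measure_lt_ofReal_exp (h : LDPseq P r I) (hr : ∀ i, 0 < r i)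
    {F : Set X} (hF : IsClosed F) {b : ℝ} (hb : -(⨅ z ∈ F, (I z : EReal)) < b) :
    ∀ᶠ i in atTop, P i F < ENNReal.ofReal (Real.exp (r i * b)) := by
  filter_upwards [eventually_lt_of_limsup_lt ((h.2 F hF).trans_lt hb)] with i hi
  exact (inv_mul_elog_lt_iff (hr i) b _).1 hi

theorem LDPseq.sub_le_zero_of_lintegral_le_one [T2Space X] [OpensMeasurableSpace X]
    (hLDP : LDPseq P r I) (hr : ∀ i, 0 < r i) (hrtop : Tendsto r atTop atTop)
    (htight : ExpTightSeq P r) {U : ℕ → X → ℝ} {Ulim : X → ℝ}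
    (hint : ∀ i, ∫⁻ z, ENNReal.ofReal (Real.exp (r i * U i z)) ∂P i ≤ 1)
    (hcont : Continuous Ulim) (hconv : ∀ K, IsCompact K → TendstoUniformlyOn U Ulim atTop K)
    (z : X) : (Ulim z : EReal) - I z ≤ 0 := by
  rcases eq_or_ne (I z) ⊤ with hz | hz
  · simp [hz]
  obtain ⟨q, hq⟩ := WithTop.ne_top_iff_exists.1 hz
  have hIz : (I z : EReal) = ((q : ℝ) : EReal) := by rw [← hq]; rfl
  rw [hIz, EReal.sub_nonpos, EReal.coe_le_coe_iff]
  by_contra! hlt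
  set ε := (Ulim z - q) / 4 with hε_def
  have hε : 0 < ε := by linarith
  set G := Ulim ⁻¹' Ioi (Ulim z - ε)
  have hG : IsOpen G := isOpen_Ioi.preimage hcont
  have hzG : z ∈ G := show Ulim z - ε < Ulim z by linarith
  have hPG := hLDP.eventually_ofReal_exp_lt_measure hr hG (a := -(q + ε)) <| by
    refine lt_of_lt_of_le ?_ (EReal.neg_le_neg_iff.2 (iInf₂_le z hzG))
    rw [hIz, ← EReal.coe_neg, EReal.coe_lt_coe_iff]
    linarith
  obtain ⟨K, hK, hPK⟩ := htight.exists_isCompact_eventually_measure_compl_lt hr (-(q + 2 * ε))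
  have hUK := Metric.tendstoUniformlyOn_iff.1 (hconv K hK) ε hε
  have hbig : ∀ᶠ i in atTop, 2 < Real.exp (r i * ε) :=
    (Real.tendsto_exp_atTop.comp (hrtop.atTop_mul_const hε)).eventually_gt_atTop 2
  obtain ⟨i, hPGi, hPKi, hUKi, hbigi⟩ := (hPG.and (hPK.and (hUK.and hbig))).exists
  set m := ENNReal.ofReal (Real.exp (r i * (Ulim z - 2 * ε)))
  have hGK : m * P i (G ∩ K) ≤ 1 := by
    refine (ofReal_exp_mul_le_setLIntegral _ (hG.measurableSet.inter hK.isClosed.measurableSet)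
      (hr i).le fun w hw => ?_).trans ((setLIntegral_le_lintegral _ _).trans (hint i))
    have h1 : Ulim z - ε < Ulim w := hw.1
    have h2 := hUKi w hw.2
    rw [Real.dist_eq, abs_sub_lt_iff] at h2
    linarith
  have hsplit : P i G ≤ P i (G ∩ K) + P i Kᶜ :=
    (measure_le_inter_add_sdiff _ _ _).trans (by gcongr; exact sdiff_subset_compl _ _)
  -- `m * exp (-r (q + ε)) = exp (r ε)` while `m * exp (-r (q + 2ε)) = 1`
  have hexp : ENNReal.ofReal (Real.exp (r i * ε)) ≤ ENNReal.ofReal 2 :=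
    calc ENNReal.ofReal (Real.exp (r i * ε))
        = m * ENNReal.ofReal (Real.exp (r i * -(q + ε))) := by
          rw [ofReal_exp_mul_ofReal_exp]; congr 2; rw [hε_def]; ring
      _ ≤ m * (P i (G ∩ K) + P i Kᶜ) := by
          gcongr
          exact hPGi.le.trans hsplit
      _ ≤ 1 + m * ENNReal.ofReal (Real.exp (r i * -(q + 2 * ε))) := by
          rw [mul_add]; gcongr
      _ = 1 + ENNReal.ofReal (Real.exp 0) := by
          rw [ofReal_exp_mul_ofReal_exp]; congr 3; rw [hε_def]; ring
      _ = ENNReal.ofReal 2 := by norm_num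
  rw [ENNReal.ofReal_le_ofReal_iff zero_le_two] at hexp
  linarith

theorem LDPseq.exists_mem_nhds_eventually_setLIntegral_le [RegularSpace X]
    (hLDP : LDPseq P r I) (hr : ∀ i, 0 < r i) {U : ℕ → X → ℝ} {Ulim : X → ℝ} {K : Set X}
    (hcont : Continuous Ulim) (hconv : TendstoUniformlyOn U Ulim atTop K) {s t : ℝ}
    (hs : ∀ z, (Ulim z : EReal) - I z ≤ s) (hst : s < t) (x : X) :
    ∃ V ∈ 𝓝 x, ∀ᶠ i in atTop,
      ∫⁻ z in K ∩ V, ENNReal.ofReal (Real.exp (r i * U i z)) ∂P i ≤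
        ENNReal.ofReal (Real.exp (r i * t)) := by
  set ε := (t - s) / 4 with hε_def
  have hε : 0 < ε := by linarith
  obtain ⟨V, hVx, hVc, hV⟩ := exists_mem_nhds_isClosed_subset
    (Metric.continuousAt_iff'.1 hcont.continuousAt ε hε)
  refine ⟨V, hVx, ?_⟩
  have hIV : ((Ulim x - ε - s : ℝ) : EReal) ≤ ⨅ w ∈ V, (I w : EReal) := by
    refine le_iInf₂ fun w hw => ?_
    have h1 : dist (Ulim w) (Ulim x) < ε := hV hw
    rw [Real.dist_eq, abs_sub_lt_iff] at h1
    have h2 : (Ulim w : EReal) - s ≤ I w := EReal.sub_le_of_le_add' <|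
      (EReal.sub_le_iff_le_add (.inl (EReal.coe_ennreal_ne_bot _)) (.inr (EReal.coe_ne_bot s))).1
        (hs w)
    exact le_trans (by exact_mod_cast (by linarith : Ulim x - ε - s ≤ Ulim w - s)) h2
  have hPV := hLDP.eventually_measure_lt_ofReal_exp hr hVc (b := s + 2 * ε - Ulim x) <| by
    refine (EReal.neg_le_neg_iff.2 hIV).trans_lt ?_
    rw [← EReal.coe_neg, EReal.coe_lt_coe_iff]
    linarith
  filter_upwards [hPV, Metric.tendstoUniformlyOn_iff.1 hconv ε hε] with i hPVi hUi
  calc ∫⁻ z in K ∩ V, ENNReal.ofReal (Real.exp (r i * U i z)) ∂P i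
      ≤ ENNReal.ofReal (Real.exp (r i * (Ulim x + 2 * ε))) * P i (K ∩ V) := by
        refine setLIntegral_ofReal_exp_mul_le _ (hr i).le fun w hw => ?_
        have h1 : dist (Ulim w) (Ulim x) < ε := hV hw.2
        have h2 := hUi w hw.1
        rw [Real.dist_eq, abs_sub_lt_iff] at h1 h2
        linarith
    _ ≤ ENNReal.ofReal (Real.exp (r i * (Ulim x + 2 * ε))) *
          ENNReal.ofReal (Real.exp (r i * (s + 2 * ε - Ulim x))) := by
        gcongr
        exact (measure_mono inter_subset_right).trans hPVi.le
    _ = ENNReal.ofReal (Real.exp (r i * t)) := by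
        rw [ofReal_exp_mul_ofReal_exp, hε_def]; congr 2; ring

theorem LDPseq.zero_le_iSup_sub_of_one_le_lintegral [RegularSpace X]
    (hLDP : LDPseq P r I) (hr : ∀ i, 0 < r i) (hrtop : Tendsto r atTop atTop)
    (htight : ExpTightSeq P r) {U : ℕ → X → ℝ} {Ulim : X → ℝ} {C : ℝ} (hUC : ∀ i z, U i z ≤ C)
    (hint : ∀ i, 1 ≤ ∫⁻ z, ENNReal.ofReal (Real.exp (r i * U i z)) ∂P i)
    (hcont : Continuous Ulim) (hconv : ∀ K, IsCompact K → TendstoUniformlyOn U Ulim atTop K) :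
    0 ≤ ⨆ z, (Ulim z : EReal) - I z := by
  by_contra! hneg
  obtain ⟨s, hsup, hs0⟩ := EReal.exists_between_coe_real hneg
  have hs : ∀ z, (Ulim z : EReal) - I z ≤ s := fun z => (le_iSup _ z).trans hsup.le
  have hst : s < s / 2 := by linarith [show s < 0 by exact_mod_cast hs0]
  obtain ⟨K, hK, hPK⟩ := htight.exists_isCompact_eventually_measure_compl_lt hr (s / 2 - C)
  obtain ⟨N, hN⟩ := hK.exists_eventually_setLIntegral_le fun x _ =>
    hLDP.exists_mem_nhds_eventually_setLIntegral_le hr hcont (hconv K hK) hs hst x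
  have hsmall : ∀ᶠ i in atTop, (N + 1) * ENNReal.ofReal (Real.exp (r i * (s / 2))) < 1 := by
    have := ENNReal.Tendsto.const_mul (a := N + 1)
      (tendsto_ofReal_exp_mul_of_neg hrtop (b := s / 2) (by linarith)) (.inr (by simp))
    rw [mul_zero] at this
    exact this.eventually_lt_const zero_lt_one
  obtain ⟨i, hNi, hPKi, hsmalli⟩ := (hN.and (hPK.and hsmall)).exists
  refine (hint i).not_gt (lt_of_le_of_lt ?_ hsmalli)
  calc ∫⁻ z, ENNReal.ofReal (Real.exp (r i * U i z)) ∂P i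
      ≤ ∫⁻ z in K, ENNReal.ofReal (Real.exp (r i * U i z)) ∂P i +
          ∫⁻ z in Kᶜ, ENNReal.ofReal (Real.exp (r i * U i z)) ∂P i :=
        lintegral_le_setLIntegral_add_compl _ _ _
    _ ≤ N * ENNReal.ofReal (Real.exp (r i * (s / 2))) +
          ENNReal.ofReal (Real.exp (r i * C)) * ENNReal.ofReal (Real.exp (r i * (s / 2 - C))) := by
        gcongr
        exact (setLIntegral_ofReal_exp_mul_le _ (hr i).le fun z _ => hUC i z).trans (by gcongr)
    _ = (N + 1) * ENNReal.ofReal (Real.exp (r i * (s / 2))) := by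
        rw [ofReal_exp_mul_ofReal_exp, add_mul, one_mul]; congr 4; ring

end LargeDeviations

theorem sup_U_sub_I_eq_zero_general
    {𝕊 : Type*} [MetricSpace 𝕊] [MeasurableSpace 𝕊] [BorelSpace 𝕊]
    (P : ℕ → Measure 𝕊)
    (r : ℕ → ℝ) (hrpos : ∀ i, 0 < r i) (hrtop : Tendsto r atTop atTop)
    (htight : ExpTightSeq P r)
    (I : 𝕊 → ENNReal)
    (hIlim : ∃ φ : ℕ → ℕ, StrictMono φ ∧ LDPseq (P ∘ φ) (r ∘ φ) I)
    (U : ℕ → 𝕊 → ℝ)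
    (hUbd : ∃ C : ℝ, ∀ i z, |U i z| ≤ C)
    (hUint : ∀ i, ∫ z, Real.exp (r i * U i z) ∂(P i) = 1)
    (Ulim : 𝕊 → ℝ) (hUlimcont : Continuous Ulim)
    (hUconv : ∀ K : Set 𝕊, IsCompact K → TendstoUniformlyOn U Ulim atTop K) :
    (⨆ z : 𝕊, ((Ulim z : EReal) - (I z : EReal))) = 0 := by
  obtain ⟨φ, hφ, hLDP⟩ := hIlim
  obtain ⟨C, hC⟩ := hUbd
  have hφ_tendsto := hφ.tendsto_atTop
  have hint : ∀ i, ∫⁻ z, ENNReal.ofReal (Real.exp (r i * U i z)) ∂P i = 1 := fun i => by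
    rw [← ofReal_integral_eq_lintegral_ofReal (.of_integral_ne_zero (by simp [hUint i]))
      (ae_of_all _ fun z => (Real.exp_pos _).le), hUint i, ENNReal.ofReal_one]
  have hrφ : ∀ i, 0 < (r ∘ φ) i := fun i => hrpos (φ i)
  have hrφ_tendsto := hrtop.comp hφ_tendsto
  have htightφ := htight.comp_tendsto hφ_tendsto
  have hconvφ : ∀ K, IsCompact K → TendstoUniformlyOn (U ∘ φ) Ulim atTop K := fun K hK =>
    (hUconv K hK).seq_tendstoUniformlyOn φ hφ_tendsto
  refine le_antisymm (iSup_le fun z => ?_) ?_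
  · exact hLDP.sub_le_zero_of_lintegral_le_one hrφ hrφ_tendsto htightφ (fun i => (hint _).le)
      hUlimcont hconvφ z
  · exact hLDP.zero_le_iSup_sub_of_one_le_lintegral hrφ hrφ_tendsto htightφ
      (fun i z => (le_abs_self _).trans (hC _ z)) (fun i => (hint _).ge) hUlimcont hconvφ

/-- Varadhan-type identification of LD limit points: if `∫ exp(r_i U_i) dP_i = 1` for
uniformly bounded measurable `U_i` converging uniformly on compacts to a continuous `U`,
and `I` is an LD limit point of the exponentially tight sequence `(P_i)`,
then `sup_z (U(z) − I(z)) = 0`. -/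
theorem sup_U_sub_I_eq_zero
    {𝕊 : Type*} [MetricSpace 𝕊] [MeasurableSpace 𝕊] [BorelSpace 𝕊]
    (P : ℕ → Measure 𝕊) (hP : ∀ i, IsProbabilityMeasure (P i))
    (r : ℕ → ℝ) (hrpos : ∀ i, 0 < r i) (hrtop : Tendsto r atTop atTop)
    (htight : ExpTightSeq P r)
    (I : 𝕊 → ENNReal) (hIrate : IsLDRateFun I)
    (hIlim : ∃ φ : ℕ → ℕ, StrictMono φ ∧ LDPseq (P ∘ φ) (r ∘ φ) I)
    (U : ℕ → 𝕊 → ℝ) (hUmeas : ∀ i, Measurable (U i))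
    (hUbd : ∃ C : ℝ, ∀ i z, |U i z| ≤ C)
    (hUint : ∀ i, ∫ z, Real.exp (r i * U i z) ∂(P i) = 1)
    (Ulim : 𝕊 → ℝ) (hUlimcont : Continuous Ulim)
    (hUconv : ∀ K : Set 𝕊, IsCompact K → TendstoUniformlyOn U Ulim atTop K) :
    (⨆ z : 𝕊, ((Ulim z : EReal) - (I z : EReal))) = 0 :=
  sup_U_sub_I_eq_zero_general P r hrpos hrtop htight I hIlim U hUbd hUint Ulim hUlimcont hUconv
end

section
/- Let 𝕊 be a metric space, I : 𝕊 → [0,∞] a large deviation function, and 𝒰 a collection of functions U : 𝕊 → ℝ with sup_{z∈𝕊}(U(z) − I(z)) = 0 for each U ∈ 𝒰. Set I**(z) = sup_{U∈𝒰} U(z). If for every z ∈ 𝕊 with I**(z) < ∞ there exists a sequence of points z_i ∈ 𝕊 such that I(z_i) = I**(z_i) for all i, z_i → z, and I**(z_i) → I**(z) as i → ∞, then I(z) = I**(z) for all z ∈ 𝕊. -/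
/-!
Every `U ∈ 𝓤` lies below `I`, so `I** ≤ I`. Compact sublevel sets make `I` lower
semicontinuous, and at a point with `I** z < ∞` the approximating sequence gives
`I z ≤ liminf I (zᵢ) = lim I** (zᵢ) = I** z`.
-/

open Filter Set Topology

theorem IsLDRateFun.lowerSemicontinuous {𝕊 : Type*} [TopologicalSpace 𝕊] [T2Space 𝕊]
    {I : 𝕊 → ENNReal} (hI : IsLDRateFun I) : LowerSemicontinuous I := by
  refine lowerSemicontinuous_iff_isClosed_preimage.2 fun c => ?_
  induction c using ENNReal.recTopCoe with
  | top => simp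
  | coe δ => exact (hI δ).isClosed

theorem LowerSemicontinuousAt.le_of_tendsto {α γ ι : Type*} [TopologicalSpace α]
    [LinearOrder γ] [DenselyOrdered γ] [TopologicalSpace γ] [OrderClosedTopology γ]
    {f : α → γ} {x : α} {l : Filter ι} [l.NeBot] {u : ι → α} {y : γ}
    (hf : LowerSemicontinuousAt f x) (hu : Tendsto u l (𝓝 x))
    (hfu : Tendsto (f ∘ u) l (𝓝 y)) : f x ≤ y :=
  le_of_forall_lt_imp_le_of_dense fun _ hb =>
    ge_of_tendsto hfu ((hu.eventually (hf _ hb)).mono fun _ => le_of_lt)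

theorem coe_le_of_iSup_sub_eq_zero {α : Type*} {U : α → ℝ} {I : α → ENNReal}
    (h : ⨆ z, ((U z : EReal) - (I z : EReal)) = 0) (z : α) : (U z : EReal) ≤ I z :=
  EReal.sub_nonpos.1 (h ▸ le_iSup (fun w => (U w : EReal) - (I w : EReal)) z)

/-- Identification of the rate function by approximation (part 2 of Theorem `the:id`):
if every point with `I** z < ∞` can be approximated by points where `I = I**`, with the
values `I**` converging as well, then `I = I**` everywhere. -/
theorem rate_function_identification_by_approximation
    {𝕊 : Type*} [MetricSpace 𝕊]
    (I : 𝕊 → ENNReal) (hI : IsLDRateFun I)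
    (𝓤 : Set (𝕊 → ℝ))
    (h𝓤 : ∀ U ∈ 𝓤, (⨆ z : 𝕊, ((U z : EReal) - (I z : EReal))) = 0)
    (happrox : ∀ z : 𝕊, (⨆ U ∈ 𝓤, ((U z : ℝ) : EReal)) < ⊤ →
      ∃ zi : ℕ → 𝕊,
        (∀ i, (I (zi i) : EReal) = ⨆ U ∈ 𝓤, ((U (zi i) : ℝ) : EReal)) ∧
        Tendsto zi atTop (nhds z) ∧
        Tendsto (fun i => ⨆ U ∈ 𝓤, ((U (zi i) : ℝ) : EReal)) atTop
          (nhds (⨆ U ∈ 𝓤, ((U z : ℝ) : EReal)))) :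
    ∀ z : 𝕊, (I z : EReal) = ⨆ U ∈ 𝓤, ((U z : ℝ) : EReal) := by
  have hle (z : 𝕊) : (⨆ U ∈ 𝓤, ((U z : ℝ) : EReal)) ≤ I z :=
    iSup₂_le fun U hU => coe_le_of_iSup_sub_eq_zero (h𝓤 U hU) z
  intro z
  have hlsc : LowerSemicontinuousAt (fun w => (I w : EReal)) z :=
    continuous_coe_ennreal_ereal.comp_lowerSemicontinuous hI.lowerSemicontinuous
      EReal.coe_ennreal_strictMono.monotone z
  refine le_antisymm ?_ (hle z)
  rcases (le_top : (⨆ U ∈ 𝓤, ((U z : ℝ) : EReal)) ≤ ⊤).lt_or_eq with hfin | htop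
  · obtain ⟨zi, hval, hconv, hlim⟩ := happrox z hfin
    exact hlsc.le_of_tendsto hconv (by simpa only [Function.comp_def, hval] using hlim)
  · exact htop ▸ le_top
end

section
/- Let V be a complete separable metric space, let U ⊆ V be a dense subset, and let f : ℝ₊ × V → ℝ be a function which is Lebesgue-measurable in s for each fixed y ∈ V and continuous in y for each fixed s. Suppose that for every Lebesgue-measurable function λ : ℝ₊ → U the function s ↦ f(s, λ(s)) is locally integrable with respect to Lebesgue measure. Then for every t ∈ ℝ₊, sup_{λ ∈ Λ} ∫₀ᵗ f(s, λ(s)) ds = ∫₀ᵗ sup_{y∈U} f(s, y) ds, where Λ denotes the set of all Lebesgue-measurable functions λ : ℝ₊ → U (both sides may equal +∞; the integrand on the right is measurable by separability and continuity). -/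
/-!
Fix a sequence `d` in `U` that is dense in `V`. By continuity of `f s`, the supremum over `U`
equals the supremum over the `d i`. Choosing at each time `s` an index where
`max_{i ≤ n} f s (d i)` is attained gives measurable selections `λₙ` along which
`f s (λₙ s)` increases to that supremum, so monotone convergence (applied to positive and
negative parts) makes `∫ f(s, λₙ s)` converge to the right-hand side. Conversely every
selection is dominated pointwise by the supremum.
-/

open MeasureTheory Filter Set Topology

/-- The positive part of an extended real, as an extended nonnegative real. -/
noncomputable def posPartE (x : EReal) : ENNReal :=
  if x = ⊤ then ⊤ else ENNReal.ofReal x.toReal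

/-- Integral of an extended-real-valued function, defined as the difference of the
lower integrals of the positive and negative parts. -/
noncomputable def erealIntegral {α : Type*} [MeasurableSpace α]
    (μ : Measure α) (g : α → EReal) : EReal :=
  ((∫⁻ a, posPartE (g a) ∂μ : ENNReal) : EReal) -
    ((∫⁻ a, posPartE (-(g a)) ∂μ : ENNReal) : EReal)

open scoped ENNReal

theorem EReal.tendsto_coe_ennreal_sub {ι : Type*} {l : Filter ι} {a b : ι → ℝ≥0∞} {A B : ℝ≥0∞}
    (ha : Tendsto a l (𝓝 A)) (hb : Tendsto b l (𝓝 B)) (hB : B ≠ ∞) :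
    Tendsto (fun i => (a i : EReal) - b i) l (𝓝 ((A : EReal) - B)) := by
  have hsum : ContinuousAt (fun p : EReal × EReal => p.1 + p.2) ((A : EReal), -(B : EReal)) :=
    EReal.continuousAt_add (Or.inr (by simpa using hB)) (Or.inl (EReal.coe_ennreal_ne_bot A))
  exact hsum.tendsto.comp ((EReal.tendsto_coe_ennreal.2 ha).prodMk_nhds
    ((continuous_neg.tendsto _).comp (EReal.tendsto_coe_ennreal.2 hb)))

section erealIntegral

variable {α : Type*} [MeasurableSpace α] {μ : Measure α}

-- `posPartE` is, definitionally, Mathlib's `EReal.toENNReal`.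
theorem erealIntegral_eq (g : α → EReal) :
    erealIntegral μ g =
      (∫⁻ a, (g a).toENNReal ∂μ : ℝ≥0∞) - (∫⁻ a, (-g a).toENNReal ∂μ : ℝ≥0∞) :=
  rfl

theorem erealIntegral_mono {G H : α → EReal} (h : ∀ᵐ x ∂μ, G x ≤ H x) :
    erealIntegral μ G ≤ erealIntegral μ H := by
  simp only [erealIntegral_eq]
  refine EReal.sub_le_sub (EReal.coe_ennreal_le_coe_ennreal_iff.2 (lintegral_mono_ae ?_))
    (EReal.coe_ennreal_le_coe_ennreal_iff.2 (lintegral_mono_ae ?_))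
  · filter_upwards [h] with x hx using EReal.toENNReal_le_toENNReal hx
  · filter_upwards [h] with x hx using EReal.toENNReal_le_toENNReal (EReal.neg_le_neg_iff.2 hx)

theorem MeasureTheory.Integrable.erealIntegral_coe {g : α → ℝ} (hg : Integrable g μ) :
    erealIntegral μ (fun x => (g x : EReal)) = ((∫ x, g x ∂μ : ℝ) : EReal) := by
  have hneg : Integrable (fun x => -g x) μ := hg.neg
  rw [integral_eq_lintegral_pos_part_sub_lintegral_neg_part hg, EReal.coe_sub,
    EReal.coe_ennreal_toReal hg.lintegral_lt_top.ne,
    EReal.coe_ennreal_toReal hneg.lintegral_lt_top.ne]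
  rfl

theorem tendsto_erealIntegral_of_monotone {g : ℕ → α → ℝ} {G : α → EReal}
    (hg : ∀ n, Integrable (g n) μ) (hmono : ∀ᵐ x ∂μ, Monotone fun n => g n x)
    (hG : ∀ᵐ x ∂μ, Tendsto (fun n => (g n x : EReal)) atTop (𝓝 (G x))) :
    Tendsto (fun n => ((∫ x, g n x ∂μ : ℝ) : EReal)) atTop (𝓝 (erealIntegral μ G)) := by
  simp_rw [← (hg _).erealIntegral_coe, erealIntegral_eq]
  have hmeas : ∀ n, AEMeasurable (fun x => (g n x : EReal)) μ := fun n =>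
    (hg n).1.aemeasurable.coe_real_ereal
  have hpos := lintegral_tendsto_of_tendsto_of_monotone (F := fun x => (G x).toENNReal)
    (fun n => (hmeas n).ereal_toENNReal)
    (hmono.mono fun x hx _ _ hnm => EReal.toENNReal_le_toENNReal (EReal.coe_le_coe_iff.2 (hx hnm)))
    (hG.mono fun x hx => (EReal.continuous_toENNReal.tendsto _).comp hx)
  have hneg0 : ∫⁻ x, (-(g 0 x : EReal)).toENNReal ∂μ ≠ ∞ := by
    simpa using (hg 0).neg.lintegral_lt_top.ne
  have hneg := lintegral_tendsto_of_tendsto_of_antitone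
    (f := fun n x => (-(g n x : EReal)).toENNReal) (F := fun x => (-G x).toENNReal)
    (fun n => (hmeas n).neg.ereal_toENNReal)
    (hmono.mono fun x hx _ _ hnm => EReal.toENNReal_le_toENNReal
      (EReal.neg_le_neg_iff.2 (EReal.coe_le_coe_iff.2 (hx hnm))))
    hneg0 (hG.mono fun x hx => (EReal.continuous_toENNReal.tendsto _).comp
      ((continuous_neg.tendsto _).comp hx))
  have hG_ge : ∀ᵐ x ∂μ, (g 0 x : EReal) ≤ G x := by
    filter_upwards [hmono, hG] with x hx hxG
    exact (EReal.coe_strictMono.monotone.comp hx).ge_of_tendsto hxG 0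
  refine EReal.tendsto_coe_ennreal_sub hpos hneg (ne_top_of_le_ne_top hneg0 (lintegral_mono_ae ?_))
  filter_upwards [hG_ge] with x hx using EReal.toENNReal_le_toENNReal (EReal.neg_le_neg_iff.2 hx)

end erealIntegral

theorem exists_measurable_argmax_le {α β : Type*} {m : MeasurableSpace α} [LinearOrder β]
    [TopologicalSpace β] [OrderClosedTopology β] [SecondCountableTopology β]
    [MeasurableSpace β] [OpensMeasurableSpace β]
    {φ : ℕ → α → β} (hφ : ∀ i, Measurable (φ i)) (n : ℕ) :
    ∃ L : α → ℕ, Measurable L ∧ ∀ x, L x ≤ n ∧ ∀ i ≤ n, φ i x ≤ φ (L x) x := by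
  induction n with
  | zero =>
    exact ⟨fun _ => 0, measurable_const, fun x => ⟨le_rfl, fun i hi => by rw [Nat.le_zero.1 hi]⟩⟩
  | succ n ih =>
    obtain ⟨L, hL, hLmax⟩ := ih
    have hφL : Measurable fun x => φ (L x) x :=
      (measurable_from_prod_countable_right (f := fun p : ℕ × α => φ p.1 p.2) hφ).comp
        (hL.prodMk measurable_id)
    classical
    refine ⟨fun x => if φ (L x) x < φ (n + 1) x then n + 1 else L x,
      Measurable.ite (measurableSet_lt hφL (hφ _)) measurable_const hL, fun x => ?_⟩
    obtain ⟨hLn, hLφ⟩ := hLmax x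
    dsimp only
    split_ifs with h
    · refine ⟨le_rfl, fun i hi => ?_⟩
      rcases Nat.le_succ_iff.1 hi with hi | rfl
      exacts [(hLφ i hi).trans h.le, le_rfl]
    · refine ⟨hLn.trans n.le_succ, fun i hi => ?_⟩
      rcases Nat.le_succ_iff.1 hi with hi | rfl
      exacts [hLφ i hi, not_lt.1 h]

theorem exists_nullMeasurable_selection_tendsto_iSup {α X : Type*} [MeasurableSpace α]
    {μ : Measure α} [MeasurableSpace X] (φ : α → X → ℝ) (d : ℕ → X)
    (hφ : ∀ i, NullMeasurable (fun x => φ x (d i)) μ) :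
    ∃ lam : ℕ → α → X, (∀ n, NullMeasurable (lam n) μ) ∧ (∀ n x, lam n x ∈ range d) ∧
      ∀ x, Monotone (fun n => φ x (lam n x)) ∧
        Tendsto (fun n => (φ x (lam n x) : EReal)) atTop (𝓝 (⨆ i, (φ x (d i) : EReal))) := by
  -- `NullMeasurable` is measurability for the completed σ-algebra of `NullMeasurableSpace α μ`.
  choose L hL hLmax using exists_measurable_argmax_le (α := NullMeasurableSpace α μ)
    (φ := fun i x => φ x (d i)) hφ
  refine ⟨fun n x => d (L n x), fun n => measurable_from_top.comp (hL n),
    fun n x => mem_range_self _, fun x => ?_⟩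
  have hmono : Monotone fun n => φ x (d (L n x)) :=
    monotone_nat_of_le_succ fun n => (hLmax (n + 1) x).2 _ ((hLmax n x).1.trans n.le_succ)
  refine ⟨hmono, ?_⟩
  have hsup : ⨆ n, (φ x (d (L n x)) : EReal) = ⨆ i, (φ x (d i) : EReal) :=
    le_antisymm (iSup_le fun n => le_iSup (fun i => (φ x (d i) : EReal)) (L n x))
      (iSup_mono fun i => EReal.coe_le_coe_iff.2 ((hLmax i x).2 i le_rfl))
  rw [← hsup]
  exact tendsto_atTop_iSup (EReal.coe_strictMono.monotone.comp hmono)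

theorem DenseRange.biSup_eq_iSup_comp {ι X β : Type*} [TopologicalSpace X] [CompleteLattice β]
    [TopologicalSpace β] [ClosedIicTopology β] {d : ι → X} (hd : DenseRange d) {U : Set X}
    (hdU : ∀ i, d i ∈ U) {φ : X → β} (hφ : Continuous φ) :
    ⨆ y ∈ U, φ y = ⨆ i, φ (d i) :=
  le_antisymm (iSup₂_le fun y _ => hd.induction_on y (isClosed_Iic.preimage hφ)
      fun i => le_iSup (φ ∘ d) i)
    (iSup_le fun i => le_iSup₂ (f := fun y _ => φ y) (d i) (hdU i))

theorem sup_integral_eq_integral_sup_general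
    {V : Type*} [MetricSpace V] [TopologicalSpace.SeparableSpace V]
    [Nonempty V] [MeasurableSpace V]
    (U : Set V) (hU : Dense U)
    (f : ℝ → V → ℝ)
    (hmeas : ∀ y : V, NullMeasurable (fun s => f s y) (volume.restrict (Set.Ici (0 : ℝ))))
    (hcont : ∀ s : ℝ, Continuous (f s))
    (hint : ∀ lam : ℝ → V, NullMeasurable lam (volume.restrict (Set.Ici (0 : ℝ))) →
      (∀ s, lam s ∈ U) → ∀ t : ℝ, 0 ≤ t →
        IntegrableOn (fun s => f s (lam s)) (Set.Icc (0 : ℝ) t)) :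
    ∀ t : ℝ, 0 ≤ t →
      (⨆ lam : {l : ℝ → V //
          NullMeasurable l (volume.restrict (Set.Ici (0 : ℝ))) ∧ ∀ s, l s ∈ U},
        ((∫ s in Set.Icc (0 : ℝ) t, f s (lam.1 s) : ℝ) : EReal))
      = erealIntegral (volume.restrict (Set.Icc (0 : ℝ) t))
          (fun s => ⨆ y ∈ U, ((f s y : ℝ) : EReal)) := by
  intro t ht
  have : Nonempty U := hU.nonempty.to_subtype
  obtain ⟨u, hu⟩ := TopologicalSpace.exists_dense_seq U
  obtain ⟨d, hdU, hd⟩ : ∃ d : ℕ → V, (∀ i, d i ∈ U) ∧ DenseRange d :=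
    ⟨_, fun i => (u i).2, hU.denseRange_val.comp hu continuous_subtype_val⟩
  obtain ⟨lam, hlam_meas, hlam_mem, hlam⟩ :=
    exists_nullMeasurable_selection_tendsto_iSup f d fun i => hmeas (d i)
  have hlamU : ∀ n s, lam n s ∈ U := fun n s => range_subset_iff.2 hdU (hlam_mem n s)
  have hsup : ∀ s, ⨆ y ∈ U, (f s y : EReal) = ⨆ i, (f s (d i) : EReal) := fun s =>
    hd.biSup_eq_iSup_comp hdU (continuous_coe_real_ereal.comp (hcont s))
  apply le_antisymm
  · refine iSup_le fun l => ?_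
    rw [← (hint l.1 l.2.1 l.2.2 t ht).erealIntegral_coe]
    exact erealIntegral_mono (ae_of_all _ fun s =>
      le_iSup₂ (f := fun y _ => (f s y : EReal)) (l.1 s) (l.2.2 s))
  · refine le_of_tendsto' (tendsto_erealIntegral_of_monotone
      (fun n => hint _ (hlam_meas n) (hlamU n) t ht) (ae_of_all _ fun s => (hlam s).1)
      (ae_of_all _ fun s => hsup s ▸ (hlam s).2)) fun n => ?_
    exact le_iSup_of_le ⟨lam n, hlam_meas n, hlamU n⟩ le_rfl

/-- Interchanging supremum and (Lebesgue) time integral over measurable selections with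
values in a dense subset `U` of a complete separable metric space `V`
(Lemma `le:sup` of the paper). -/
theorem sup_integral_eq_integral_sup
    {V : Type*} [MetricSpace V] [CompleteSpace V] [TopologicalSpace.SeparableSpace V]
    [Nonempty V] [MeasurableSpace V] [BorelSpace V]
    (U : Set V) (hU : Dense U)
    (f : ℝ → V → ℝ)
    (hmeas : ∀ y : V, NullMeasurable (fun s => f s y) (volume.restrict (Set.Ici (0 : ℝ))))
    (hcont : ∀ s : ℝ, Continuous (f s))
    (hint : ∀ lam : ℝ → V, NullMeasurable lam (volume.restrict (Set.Ici (0 : ℝ))) →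
      (∀ s, lam s ∈ U) → ∀ t : ℝ, 0 ≤ t →
        IntegrableOn (fun s => f s (lam s)) (Set.Icc (0 : ℝ) t)) :
    ∀ t : ℝ, 0 ≤ t →
      (⨆ lam : {l : ℝ → V //
          NullMeasurable l (volume.restrict (Set.Ici (0 : ℝ))) ∧ ∀ s, l s ∈ U},
        ((∫ s in Set.Icc (0 : ℝ) t, f s (lam.1 s) : ℝ) : EReal))
      = erealIntegral (volume.restrict (Set.Icc (0 : ℝ) t))
          (fun s => ⨆ y ∈ U, ((f s y : ℝ) : EReal)) :=
  sup_integral_eq_integral_sup_general U hU f hmeas hcont hint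
end

section
/- Let n, k, l ∈ ℕ, let B be a real n×k matrix and b a real l×k matrix such that c := b bᵀ is invertible; set C := B Bᵀ and G := B bᵀ. (i) If ε > 0 satisfies xᵀC x ≥ ε|x|² for all x ∈ ℝⁿ, and ℓ ∈ (0,1) is such that |y₁ᵀy₂| ≤ ℓ|y₁||y₂| for all y₁ in the range of Bᵀ and y₂ in the range of bᵀ, then xᵀ( C − G c^{-1} Gᵀ ) x ≥ (1−ℓ²) ε |x|² for all x ∈ ℝⁿ. (ii) Conversely, if δ > 0 and Λ > 0 are such that xᵀ( C − G c^{-1} Gᵀ ) x ≥ δ|x|² and xᵀC x ≤ Λ|x|² for all x ∈ ℝⁿ, then δ ≤ Λ and, with ℓ := √(1 − δ/Λ), one has |y₁ᵀy₂| ≤ ℓ|y₁||y₂| for all y₁ in the range of Bᵀ and y₂ in the range of bᵀ. -/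
/-!
With `P = bᵀ (b bᵀ)⁻¹ b` the orthogonal projection onto `range bᵀ` and `y = Bᵀ x`, one has
`xᵀ (C - G c⁻¹ Gᵀ) x = |y|² - |P y|²`. Since `|P y| = sup |y ⬝ z| / |z|` over `z ∈ range bᵀ`,
the angle condition with constant `ℓ` says exactly `|P y| ≤ ℓ |y|` on `range Bᵀ`, and both
directions become comparisons between `|P y|²` and `|y|²`.
-/

open Matrix

theorem sq_le_sq_of_sq_le_mul {a c : ℝ} (ha : 0 ≤ a) (h : a ^ 2 ≤ c * a) : a ^ 2 ≤ c ^ 2 := by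
  rcases ha.eq_or_lt with rfl | ha
  · simpa using sq_nonneg c
  · have hac : a ≤ c := le_of_mul_le_mul_right (by rwa [← sq]) ha
    exact pow_le_pow_left₀ ha.le hac 2

section

variable {k l m : Type*} [Fintype k] [Fintype l] [DecidableEq l]

theorem dotProduct_self_nonneg (y : k → ℝ) : 0 ≤ y ⬝ᵥ y :=
  Finset.sum_nonneg fun _ _ => mul_self_nonneg _

theorem abs_dotProduct_le_sqrt_mul_sqrt (y z : k → ℝ) :
    |y ⬝ᵥ z| ≤ √(y ⬝ᵥ y) * √(z ⬝ᵥ z) := by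
  rw [← Real.sqrt_mul (dotProduct_self_nonneg y)]
  exact Real.abs_le_sqrt (by
    simpa [dotProduct, sq] using Finset.sum_mul_sq_le_sq_mul_sq Finset.univ y z)

theorem dotProduct_mul_mul_transpose_mulVec [Fintype m] (B : Matrix m k ℝ) (M : Matrix k k ℝ)
    (x : m → ℝ) :
    x ⬝ᵥ ((B * M * Bᵀ) *ᵥ x) = (Bᵀ *ᵥ x) ⬝ᵥ (M *ᵥ (Bᵀ *ᵥ x)) := by
  rw [← mulVec_mulVec, ← mulVec_mulVec, dotProduct_mulVec, mulVec_transpose]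

theorem dotProduct_mul_transpose_mulVec [Fintype m] (B : Matrix m k ℝ) (x : m → ℝ) :
    x ⬝ᵥ ((B * Bᵀ) *ᵥ x) = (Bᵀ *ᵥ x) ⬝ᵥ (Bᵀ *ᵥ x) := by
  rw [← mulVec_mulVec, dotProduct_mulVec, mulVec_transpose]

noncomputable def rangeProj (b : Matrix l k ℝ) : Matrix k k ℝ := bᵀ * (b * bᵀ)⁻¹ * b

theorem rangeProj_transpose (b : Matrix l k ℝ) : (rangeProj b)ᵀ = rangeProj b := by
  rw [rangeProj, transpose_mul, transpose_mul, transpose_transpose, transpose_nonsing_inv,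
    transpose_mul, transpose_transpose, Matrix.mul_assoc]

theorem rangeProj_mulVec_eq (b : Matrix l k ℝ) (y : k → ℝ) :
    rangeProj b *ᵥ y = bᵀ *ᵥ (((b * bᵀ)⁻¹ * b) *ᵥ y) := by
  rw [rangeProj, mulVec_mulVec, Matrix.mul_assoc]

theorem rangeProj_mul_transpose {b : Matrix l k ℝ} (hc : IsUnit (b * bᵀ).det) :
    rangeProj b * bᵀ = bᵀ := by
  simp only [rangeProj, Matrix.mul_assoc]
  rw [Matrix.nonsing_inv_mul _ hc, Matrix.mul_one]

theorem rangeProj_mul_self {b : Matrix l k ℝ} (hc : IsUnit (b * bᵀ).det) :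
    rangeProj b * rangeProj b = rangeProj b := by
  calc rangeProj b * rangeProj b = rangeProj b * bᵀ * (b * bᵀ)⁻¹ * b := by
        simp only [rangeProj, Matrix.mul_assoc]
    _ = rangeProj b := by rw [rangeProj_mul_transpose hc, rangeProj]

theorem rangeProj_mulVec_transpose_mulVec {b : Matrix l k ℝ} (hc : IsUnit (b * bᵀ).det)
    (v : l → ℝ) : rangeProj b *ᵥ (bᵀ *ᵥ v) = bᵀ *ᵥ v := by
  rw [mulVec_mulVec, rangeProj_mul_transpose hc]

theorem dotProduct_rangeProj_mulVec_self {b : Matrix l k ℝ} (hc : IsUnit (b * bᵀ).det)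
    (y : k → ℝ) : (rangeProj b *ᵥ y) ⬝ᵥ (rangeProj b *ᵥ y) = y ⬝ᵥ (rangeProj b *ᵥ y) := by
  rw [dotProduct_mulVec, ← mulVec_transpose, rangeProj_transpose, mulVec_mulVec,
    rangeProj_mul_self hc, dotProduct_comm]

theorem dotProduct_rangeProj_mulVec_comm (b : Matrix l k ℝ) (y z : k → ℝ) :
    (rangeProj b *ᵥ y) ⬝ᵥ z = y ⬝ᵥ (rangeProj b *ᵥ z) := by
  rw [dotProduct_mulVec, ← mulVec_transpose, rangeProj_transpose, dotProduct_comm]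

noncomputable def schurCompl (B : Matrix m k ℝ) (b : Matrix l k ℝ) : Matrix m m ℝ :=
  B * Bᵀ - (B * bᵀ) * (b * bᵀ)⁻¹ * (B * bᵀ)ᵀ

theorem schurCompl_eq_sub_rangeProj (B : Matrix m k ℝ) (b : Matrix l k ℝ) :
    schurCompl B b = B * Bᵀ - B * rangeProj b * Bᵀ := by
  simp only [schurCompl, rangeProj, transpose_mul, transpose_transpose, Matrix.mul_assoc]

theorem dotProduct_schurCompl_mulVec [Fintype m] {B : Matrix m k ℝ} {b : Matrix l k ℝ}
    (hc : IsUnit (b * bᵀ).det) (x : m → ℝ) :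
    x ⬝ᵥ (schurCompl B b *ᵥ x) = (Bᵀ *ᵥ x) ⬝ᵥ (Bᵀ *ᵥ x)
      - (rangeProj b *ᵥ (Bᵀ *ᵥ x)) ⬝ᵥ (rangeProj b *ᵥ (Bᵀ *ᵥ x)) := by
  rw [schurCompl_eq_sub_rangeProj, sub_mulVec, dotProduct_sub, dotProduct_mul_transpose_mulVec,
    dotProduct_mul_mul_transpose_mulVec, dotProduct_rangeProj_mulVec_self hc]

theorem dotProduct_rangeProj_mulVec_le {b : Matrix l k ℝ} (hc : IsUnit (b * bᵀ).det)
    {ℓ : ℝ} {y : k → ℝ}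
    (hangle : ∀ v : l → ℝ, |y ⬝ᵥ (bᵀ *ᵥ v)| ≤ ℓ * √(y ⬝ᵥ y) * √((bᵀ *ᵥ v) ⬝ᵥ (bᵀ *ᵥ v))) :
    (rangeProj b *ᵥ y) ⬝ᵥ (rangeProj b *ᵥ y) ≤ ℓ ^ 2 * (y ⬝ᵥ y) := by
  set z := rangeProj b *ᵥ y
  -- test the angle condition against `z` itself, which lies in the range of `bᵀ`
  have hz : z ⬝ᵥ z ≤ ℓ * √(y ⬝ᵥ y) * √(z ⬝ᵥ z) := by
    have h := hangle (((b * bᵀ)⁻¹ * b) *ᵥ y)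
    rwa [← rangeProj_mulVec_eq, ← dotProduct_rangeProj_mulVec_self hc,
      abs_of_nonneg (dotProduct_self_nonneg z)] at h
  have key := sq_le_sq_of_sq_le_mul (Real.sqrt_nonneg _)
    (by rwa [Real.sq_sqrt (dotProduct_self_nonneg z)])
  rwa [Real.sq_sqrt (dotProduct_self_nonneg z), mul_pow,
    Real.sq_sqrt (dotProduct_self_nonneg y)] at key

theorem abs_dotProduct_transpose_mulVec_le {b : Matrix l k ℝ} (hc : IsUnit (b * bᵀ).det)
    {t : ℝ} {y : k → ℝ} (hy : (rangeProj b *ᵥ y) ⬝ᵥ (rangeProj b *ᵥ y) ≤ t * (y ⬝ᵥ y))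
    (v : l → ℝ) :
    |y ⬝ᵥ (bᵀ *ᵥ v)| ≤ √t * √(y ⬝ᵥ y) * √((bᵀ *ᵥ v) ⬝ᵥ (bᵀ *ᵥ v)) := by
  calc |y ⬝ᵥ (bᵀ *ᵥ v)|
      = |(rangeProj b *ᵥ y) ⬝ᵥ (bᵀ *ᵥ v)| := by
        rw [dotProduct_rangeProj_mulVec_comm, rangeProj_mulVec_transpose_mulVec hc]
    _ ≤ √((rangeProj b *ᵥ y) ⬝ᵥ (rangeProj b *ᵥ y)) * √((bᵀ *ᵥ v) ⬝ᵥ (bᵀ *ᵥ v)) :=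
        abs_dotProduct_le_sqrt_mul_sqrt _ _
    _ ≤ √t * √(y ⬝ᵥ y) * √((bᵀ *ᵥ v) ⬝ᵥ (bᵀ *ᵥ v)) := by
        rw [← Real.sqrt_mul' t (dotProduct_self_nonneg y)]
        gcongr

section

variable [Fintype m] {B : Matrix m k ℝ} {b : Matrix l k ℝ}

theorem dotProduct_schurCompl_mulVec_le (hc : IsUnit (b * bᵀ).det) (x : m → ℝ) :
    x ⬝ᵥ (schurCompl B b *ᵥ x) ≤ x ⬝ᵥ ((B * Bᵀ) *ᵥ x) := by
  rw [dotProduct_schurCompl_mulVec hc, dotProduct_mul_transpose_mulVec]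
  linarith [dotProduct_self_nonneg (rangeProj b *ᵥ (Bᵀ *ᵥ x))]

theorem le_of_schurCompl_lower_bound [Nonempty m] (hc : IsUnit (b * bᵀ).det) {δ Λ : ℝ}
    (hS : ∀ x : m → ℝ, δ * (x ⬝ᵥ x) ≤ x ⬝ᵥ (schurCompl B b *ᵥ x))
    (hC : ∀ x : m → ℝ, x ⬝ᵥ ((B * Bᵀ) *ᵥ x) ≤ Λ * (x ⬝ᵥ x)) : δ ≤ Λ := by
  classical
  obtain ⟨i⟩ := ‹Nonempty m›
  have hx : Pi.single i 1 ⬝ᵥ Pi.single i (1 : ℝ) = 1 := by simp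
  simpa [hx] using
    (hS _).trans ((dotProduct_schurCompl_mulVec_le hc _).trans (hC (Pi.single i 1)))

theorem schurCompl_lower_bound_of_angle (hc : IsUnit (b * bᵀ).det) {ε ℓ : ℝ} (hℓ : ℓ ^ 2 ≤ 1)
    (hC : ∀ x : m → ℝ, ε * (x ⬝ᵥ x) ≤ x ⬝ᵥ ((B * Bᵀ) *ᵥ x))
    (hangle : ∀ (u : m → ℝ) (v : l → ℝ), |(Bᵀ *ᵥ u) ⬝ᵥ (bᵀ *ᵥ v)| ≤
      ℓ * √((Bᵀ *ᵥ u) ⬝ᵥ (Bᵀ *ᵥ u)) * √((bᵀ *ᵥ v) ⬝ᵥ (bᵀ *ᵥ v)))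
    (x : m → ℝ) : (1 - ℓ ^ 2) * ε * (x ⬝ᵥ x) ≤ x ⬝ᵥ (schurCompl B b *ᵥ x) := by
  have hproj := dotProduct_rangeProj_mulVec_le hc (hangle x)
  have hεx := hC x
  rw [dotProduct_mul_transpose_mulVec] at hεx
  rw [dotProduct_schurCompl_mulVec hc, mul_assoc]
  nlinarith [mul_le_mul_of_nonneg_left hεx (sub_nonneg.2 hℓ)]

theorem angle_of_schurCompl_lower_bound (hc : IsUnit (b * bᵀ).det) {δ Λ : ℝ} (hδ : 0 ≤ δ)
    (hΛ : 0 < Λ)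
    (hS : ∀ x : m → ℝ, δ * (x ⬝ᵥ x) ≤ x ⬝ᵥ (schurCompl B b *ᵥ x))
    (hC : ∀ x : m → ℝ, x ⬝ᵥ ((B * Bᵀ) *ᵥ x) ≤ Λ * (x ⬝ᵥ x)) (u : m → ℝ) (v : l → ℝ) :
    |(Bᵀ *ᵥ u) ⬝ᵥ (bᵀ *ᵥ v)| ≤
      √(1 - δ / Λ) * √((Bᵀ *ᵥ u) ⬝ᵥ (Bᵀ *ᵥ u)) * √((bᵀ *ᵥ v) ⬝ᵥ (bᵀ *ᵥ v)) := by
  refine abs_dotProduct_transpose_mulVec_le hc ?_ v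
  have hSu := hS u
  have hCu := hC u
  rw [dotProduct_schurCompl_mulVec hc] at hSu
  rw [dotProduct_mul_transpose_mulVec] at hCu
  have : δ / Λ * ((Bᵀ *ᵥ u) ⬝ᵥ (Bᵀ *ᵥ u)) ≤ δ * (u ⬝ᵥ u) := by
    rw [div_mul_eq_mul_div, div_le_iff₀ hΛ]
    nlinarith
  linarith

end

end

theorem angle_condition_equivalence_general
    (n k l : ℕ) (hn : 0 < n)
    (B : Matrix (Fin n) (Fin k) ℝ) (b : Matrix (Fin l) (Fin k) ℝ)
    (hc : IsUnit (b * bᵀ).det) :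
    -- (i) the angle condition plus uniform ellipticity of `C` gives uniform
    -- ellipticity of `C − G c⁻¹ Gᵀ`
    ((∀ ε : ℝ, 0 < ε →
      (∀ x : Fin n → ℝ, ε * (x ⬝ᵥ x) ≤ x ⬝ᵥ ((B * Bᵀ) *ᵥ x)) →
      ∀ ℓ : ℝ, 0 < ℓ → ℓ < 1 →
      (∀ (u : Fin n → ℝ) (v : Fin l → ℝ),
        |(Bᵀ *ᵥ u) ⬝ᵥ (bᵀ *ᵥ v)| ≤
          ℓ * Real.sqrt ((Bᵀ *ᵥ u) ⬝ᵥ (Bᵀ *ᵥ u)) *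
            Real.sqrt ((bᵀ *ᵥ v) ⬝ᵥ (bᵀ *ᵥ v))) →
      ∀ x : Fin n → ℝ,
        (1 - ℓ ^ 2) * ε * (x ⬝ᵥ x) ≤
          x ⬝ᵥ ((B * Bᵀ - (B * bᵀ) * (b * bᵀ)⁻¹ * (B * bᵀ)ᵀ) *ᵥ x))) ∧
    -- (ii) conversely, ellipticity of `C − G c⁻¹ Gᵀ` and boundedness of `C`
    -- imply the angle condition with `ℓ = √(1 − δ/Λ)`
    (∀ δ Λ : ℝ, 0 < δ → 0 < Λ →
      (∀ x : Fin n → ℝ,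
        δ * (x ⬝ᵥ x) ≤ x ⬝ᵥ ((B * Bᵀ - (B * bᵀ) * (b * bᵀ)⁻¹ * (B * bᵀ)ᵀ) *ᵥ x)) →
      (∀ x : Fin n → ℝ, x ⬝ᵥ ((B * Bᵀ) *ᵥ x) ≤ Λ * (x ⬝ᵥ x)) →
      δ ≤ Λ ∧
      ∀ (u : Fin n → ℝ) (v : Fin l → ℝ),
        |(Bᵀ *ᵥ u) ⬝ᵥ (bᵀ *ᵥ v)| ≤
          Real.sqrt (1 - δ / Λ) * Real.sqrt ((Bᵀ *ᵥ u) ⬝ᵥ (Bᵀ *ᵥ u)) *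
            Real.sqrt ((bᵀ *ᵥ v) ⬝ᵥ (bᵀ *ᵥ v))) := by
  have : Nonempty (Fin n) := ⟨⟨0, hn⟩⟩
  refine ⟨fun ε _ hC ℓ hℓ₀ hℓ₁ hangle => ?_, fun δ Λ hδ hΛ hS hC => ?_⟩
  · exact schurCompl_lower_bound_of_angle hc (by nlinarith) hC hangle
  · exact ⟨le_of_schurCompl_lower_bound hc hS hC,
      angle_of_schurCompl_lower_bound hc hδ.le hΛ hS hC⟩

/-- The equivalence between the "angle condition" and the uniform positive definiteness
of `C − G c⁻¹ Gᵀ`, where `C = BBᵀ`, `c = bbᵀ`, `G = Bbᵀ` (Remark after Theorem 2.1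
of the paper). -/
theorem angle_condition_equivalence
    (n k l : ℕ) (hn : 0 < n) (hk : 0 < k) (hl : 0 < l)
    (B : Matrix (Fin n) (Fin k) ℝ) (b : Matrix (Fin l) (Fin k) ℝ)
    (hc : IsUnit (b * bᵀ).det) :
    -- (i) the angle condition plus uniform ellipticity of `C` gives uniform
    -- ellipticity of `C − G c⁻¹ Gᵀ`
    ((∀ ε : ℝ, 0 < ε →
      (∀ x : Fin n → ℝ, ε * (x ⬝ᵥ x) ≤ x ⬝ᵥ ((B * Bᵀ) *ᵥ x)) →
      ∀ ℓ : ℝ, 0 < ℓ → ℓ < 1 →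
      (∀ (u : Fin n → ℝ) (v : Fin l → ℝ),
        |(Bᵀ *ᵥ u) ⬝ᵥ (bᵀ *ᵥ v)| ≤
          ℓ * Real.sqrt ((Bᵀ *ᵥ u) ⬝ᵥ (Bᵀ *ᵥ u)) *
            Real.sqrt ((bᵀ *ᵥ v) ⬝ᵥ (bᵀ *ᵥ v))) →
      ∀ x : Fin n → ℝ,
        (1 - ℓ ^ 2) * ε * (x ⬝ᵥ x) ≤
          x ⬝ᵥ ((B * Bᵀ - (B * bᵀ) * (b * bᵀ)⁻¹ * (B * bᵀ)ᵀ) *ᵥ x))) ∧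
    -- (ii) conversely, ellipticity of `C − G c⁻¹ Gᵀ` and boundedness of `C`
    -- imply the angle condition with `ℓ = √(1 − δ/Λ)`
    (∀ δ Λ : ℝ, 0 < δ → 0 < Λ →
      (∀ x : Fin n → ℝ,
        δ * (x ⬝ᵥ x) ≤ x ⬝ᵥ ((B * Bᵀ - (B * bᵀ) * (b * bᵀ)⁻¹ * (B * bᵀ)ᵀ) *ᵥ x)) →
      (∀ x : Fin n → ℝ, x ⬝ᵥ ((B * Bᵀ) *ᵥ x) ≤ Λ * (x ⬝ᵥ x)) →
      δ ≤ Λ ∧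
      ∀ (u : Fin n → ℝ) (v : Fin l → ℝ),
        |(Bᵀ *ᵥ u) ⬝ᵥ (bᵀ *ᵥ v)| ≤
          Real.sqrt (1 - δ / Λ) * Real.sqrt ((Bᵀ *ᵥ u) ⬝ᵥ (Bᵀ *ᵥ u)) *
            Real.sqrt ((bᵀ *ᵥ v) ⬝ᵥ (bᵀ *ᵥ v))) :=
  angle_condition_equivalence_general n k l hn B b hc
end
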